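/- arXiv:1408.6481 — 3 statements merged into one kernel-verified Lean document; each statement's English description precedes it below -/
import Mathlib

section
/- For every real number p ≥ 2 and every t > 0, |((t^p - 1)/p) - (t - 1)| ≥ (1/p)·|t - 1|^p. -/
/-! Multiplying by `p`, the claim is `|t - 1| ^ p ≤ t ^ p - 1 - p (t - 1)`. Both sides vanish at
`t = 1`, and on either side of `1` the derivatives compare as `(1 + x) ^ (p - 1) ≥ 1 + x ^ (p - 1)`
for `x ≥ 0` (superadditivity of `u ↦ u ^ (p - 1)`) and `(1 - s) ^ (p - 1) + s ^ (p - 1) ≤ 1`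
for `s ∈ [0, 1]` (as `u ^ (p - 1) ≤ u` on `[0, 1]`). -/

open Real Set

lemma one_add_mul_add_rpow_le_one_add_rpow {p x : ℝ} (hp : 2 ≤ p) (hx : 0 ≤ x) :
    1 + p * x + x ^ p ≤ (1 + x) ^ p := by
  let g : ℝ → ℝ := fun x ↦ (1 + x) ^ p - 1 - p * x - x ^ p
  have hg : ∀ x, HasDerivAt g (p * ((1 + x) ^ (p - 1) - 1 - x ^ (p - 1))) x := fun x ↦ by
    have h₁ := ((hasDerivAt_id' x).const_add 1).rpow_const (p := p) (Or.inr (by linarith))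
    have h₂ := (hasDerivAt_id' x).rpow_const (p := p) (Or.inr (by linarith))
    exact (((h₁.sub_const 1).sub ((hasDerivAt_id' x).const_mul p)).sub h₂).congr_deriv (by ring)
  have hmono : MonotoneOn g (Ici 0) := by
    refine monotoneOn_of_hasDerivWithinAt_nonneg (convex_Ici 0)
      (fun x _ ↦ (hg x).continuousAt.continuousWithinAt) (fun x _ ↦ (hg x).hasDerivWithinAt) ?_
    intro y hy
    rw [interior_Ici, mem_Ioi] at hy
    have hsuper := add_rpow_le_rpow_add zero_le_one hy.le (by linarith : 1 ≤ p - 1)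
    rw [one_rpow] at hsuper
    nlinarith
  have := hmono self_mem_Ici (mem_Ici.2 hx) hx
  simp only [g, add_zero, zero_rpow (by linarith : p ≠ 0), one_rpow] at this
  linarith

lemma one_sub_mul_add_rpow_le_one_sub_rpow {p s : ℝ} (hp : 2 ≤ p) (hs₀ : 0 ≤ s) (hs₁ : s ≤ 1) :
    1 - p * s + s ^ p ≤ (1 - s) ^ p := by
  let f : ℝ → ℝ := fun s ↦ (1 - s) ^ p - 1 + p * s - s ^ p
  have hf : ∀ s, HasDerivAt f (p * (1 - (1 - s) ^ (p - 1) - s ^ (p - 1))) s := fun s ↦ by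
    have h₁ := ((hasDerivAt_id' s).const_sub 1).rpow_const (p := p) (Or.inr (by linarith))
    have h₂ := (hasDerivAt_id' s).rpow_const (p := p) (Or.inr (by linarith))
    exact (((h₁.sub_const 1).add ((hasDerivAt_id' s).const_mul p)).sub h₂).congr_deriv (by ring)
  have hmono : MonotoneOn f (Icc 0 1) := by
    refine monotoneOn_of_hasDerivWithinAt_nonneg (convex_Icc 0 1)
      (fun x _ ↦ (hf x).continuousAt.continuousWithinAt) (fun x _ ↦ (hf x).hasDerivWithinAt) ?_
    intro y hy
    rw [interior_Icc, mem_Ioo] at hy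
    have h₁ := rpow_le_self_of_le_one (by linarith) (by linarith) (by linarith : 1 ≤ p - 1)
      (x := 1 - y)
    have h₂ := rpow_le_self_of_le_one hy.1.le hy.2.le (by linarith : 1 ≤ p - 1)
    nlinarith
  have := hmono (left_mem_Icc.2 zero_le_one) ⟨hs₀, hs₁⟩ hs₀
  simp only [f, sub_zero, mul_zero, zero_rpow (by linarith : p ≠ 0), one_rpow] at this
  linarith

lemma abs_sub_one_rpow_le {p t : ℝ} (hp : 2 ≤ p) (ht : 0 ≤ t) :
    |t - 1| ^ p ≤ t ^ p - 1 - p * (t - 1) := by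
  rcases le_total 1 t with h | h
  · have := one_add_mul_add_rpow_le_one_add_rpow hp (sub_nonneg.2 h)
    rw [add_sub_cancel] at this
    rw [abs_of_nonneg (sub_nonneg.2 h)]
    linarith
  · have := one_sub_mul_add_rpow_le_one_sub_rpow hp (sub_nonneg.2 h) (by linarith)
    rw [sub_sub_cancel] at this
    rw [abs_of_nonpos (sub_nonpos.2 h), neg_sub]
    linarith

theorem stmt_0 (p t : ℝ) (hp : 2 ≤ p) (ht : 0 < t) :
    |((t ^ p - 1) / p) - (t - 1)| ≥ (1 / p) * |t - 1| ^ p := by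
  have hp₀ : 0 < p := by linarith
  have hkey := abs_sub_one_rpow_le hp ht.le
  have hlhs : ((t ^ p - 1) / p) - (t - 1) = (t ^ p - 1 - p * (t - 1)) / p := by
    field_simp
  rw [hlhs, abs_of_nonneg (div_nonneg ((rpow_nonneg (abs_nonneg _) p).trans hkey) hp₀.le),
    ge_iff_le, one_div_mul_eq_div]
  gcongr
end

section
/- Let u : ℝ^N → ℝ be C³ with bounded derivatives and Φ_t(x) = x + tη(x) + (t²/2)ζ(x) with η, ζ ∈ C^2 compactly supported. Then for each y, the function t ↦ u(Φ_t^{-1}(y)) has Taylor expansion u(y) − t·(∇u(y)·η(y)) + (t²/2)·X₀(y) + O(t³), where X₀(y) = ⟨D²u(y)·η(y), η(y)⟩ + ⟨∇u(y), 2∇η(y)·η(y) − ζ(y)⟩. -/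
/-!
Write `g t = Φ_t⁻¹(y)`. Near `t = 0` it satisfies `g t = y - t • η (g t) - (t² / 2) • ζ (g t)`;
differentiating this identity twice at `t = 0` gives `g 0 = y`, `g' 0 = -η y` and
`g'' 0 = 2 Dη(y) η(y) - ζ(y)`. The expansion of `u ∘ g` is then the second-order chain rule
`(u ∘ g)'' = D²u(g)[g', g'] + Du(g) g''`.
-/

open Filter Topology

variable {E F : Type*} [NormedAddCommGroup E] [NormedSpace ℝ E]
  [NormedAddCommGroup F] [NormedSpace ℝ F]

theorem ContDiffAt.deriv_deriv_comp {u : E → F} {g : ℝ → E} {x : ℝ}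
    (hu : ContDiffAt ℝ 2 u (g x)) (hg : ContDiffAt ℝ 2 g x) :
    deriv (deriv (u ∘ g)) x =
      iteratedFDeriv ℝ 2 u (g x) ![deriv g x, deriv g x]
        + fderiv ℝ u (g x) (deriv (deriv g) x) := by
  have hg_near : ∀ᶠ t in 𝓝 x, ContDiffAt ℝ 2 g t := hg.eventually (by simp)
  have hu_near : ∀ᶠ t in 𝓝 x, ContDiffAt ℝ 2 u (g t) :=
    hg.continuousAt.eventually (hu.eventually (by simp))
  have h_first : deriv (u ∘ g) =ᶠ[𝓝 x] fun t => fderiv ℝ u (g t) (deriv g t) := by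
    filter_upwards [hg_near, hu_near] with t hgt hut
    exact fderiv_comp_deriv t (hut.differentiableAt two_ne_zero) (hgt.differentiableAt two_ne_zero)
  have h_fderiv : HasDerivAt (fun t => fderiv ℝ u (g t))
      (fderiv ℝ (fderiv ℝ u) (g x) (deriv g x)) x :=
    ((hu.fderiv_right (m := 1) le_rfl).differentiableAt one_ne_zero).hasFDerivAt.comp_hasDerivAt
      x (hg.differentiableAt two_ne_zero).hasDerivAt
  have h_deriv : HasDerivAt (deriv g) (deriv (deriv g) x) x :=
    ((hg.derivWithin (m := 1) le_rfl).differentiableAt one_ne_zero).hasDerivAt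
  rw [h_first.deriv_eq, (h_fderiv.clm_apply h_deriv).deriv, iteratedFDeriv_two_apply]
  rfl

noncomputable def perturbation (η ζ : E → E) (t : ℝ) (x : E) : E :=
  x + t • η x + (t ^ 2 / 2) • ζ x

section

variable {A B : ℝ → E}

-- The derivative has the same shape in `(deriv A, deriv B)` plus `A + t • B`,
-- so differentiating once more at `0` reuses this lemma.
theorem hasDerivAt_smul_add_sq_smul {t : ℝ} (hA : DifferentiableAt ℝ A t)
    (hB : DifferentiableAt ℝ B t) :
    HasDerivAt (fun s => s • A s + (s ^ 2 / 2) • B s)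
      (A t + t • B t + (t • deriv A t + (t ^ 2 / 2) • deriv B t)) t := by
  have h_sq : HasDerivAt (fun s : ℝ => s ^ 2 / 2) t t := by
    simpa using (hasDerivAt_pow 2 t).div_const 2
  refine (((hasDerivAt_id t).smul hA.hasDerivAt).add (h_sq.smul hB.hasDerivAt)).congr_deriv ?_
  simp only [id, one_smul]
  abel

theorem deriv_smul_add_sq_smul_zero (hA : DifferentiableAt ℝ A 0)
    (hB : DifferentiableAt ℝ B 0) :
    deriv (fun s => s • A s + (s ^ 2 / 2) • B s) 0 = A 0 := by
  simp [(hasDerivAt_smul_add_sq_smul hA hB).deriv]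

theorem deriv_deriv_smul_add_sq_smul_zero (hA : ContDiffAt ℝ 2 A 0)
    (hB : ContDiffAt ℝ 2 B 0) :
    deriv (deriv fun s => s • A s + (s ^ 2 / 2) • B s) 0 = (2 : ℝ) • deriv A 0 + B 0 := by
  have h_near : ∀ᶠ t in 𝓝 (0 : ℝ), ContDiffAt ℝ 2 A t ∧ ContDiffAt ℝ 2 B t :=
    (hA.eventually (by simp)).and (hB.eventually (by simp))
  have h_first : (deriv fun s => s • A s + (s ^ 2 / 2) • B s) =ᶠ[𝓝 0]
      fun t => A t + t • B t + (t • deriv A t + (t ^ 2 / 2) • deriv B t) := by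
    filter_upwards [h_near] with t ⟨hAt, hBt⟩
    exact (hasDerivAt_smul_add_sq_smul (hAt.differentiableAt two_ne_zero)
      (hBt.differentiableAt two_ne_zero)).deriv
  have hA' : DifferentiableAt ℝ (deriv A) 0 :=
    (hA.derivWithin (m := 1) le_rfl).differentiableAt one_ne_zero
  have hB' : DifferentiableAt ℝ (deriv B) 0 :=
    (hB.derivWithin (m := 1) le_rfl).differentiableAt one_ne_zero
  have h_second := ((hA.differentiableAt two_ne_zero).hasDerivAt.add
    ((hasDerivAt_id 0).smul (hB.differentiableAt two_ne_zero).hasDerivAt)).add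
      (hasDerivAt_smul_add_sq_smul hA' hB')
  rw [h_first.deriv_eq]
  refine (h_second.congr_deriv ?_).deriv
  simp only [id, zero_smul, one_smul, zero_pow two_ne_zero, zero_div]
  module

end

section

variable {g : ℝ → E} {η ζ : E → E} {y : E}

theorem eventuallyEq_sub_of_perturbation_eq
    (h : ∀ᶠ t in 𝓝 0, perturbation η ζ t (g t) = y) :
    g =ᶠ[𝓝 0] fun t => y - (t • η (g t) + (t ^ 2 / 2) • ζ (g t)) :=
  h.mono fun t ht => by
    dsimp only
    rw [← ht, perturbation]
    abel

theorem apply_zero_of_perturbation_eq (h : ∀ᶠ t in 𝓝 0, perturbation η ζ t (g t) = y) :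
    g 0 = y := by
  simpa [perturbation] using h.self_of_nhds

theorem deriv_zero_of_perturbation_eq (hg : DifferentiableAt ℝ g 0)
    (hη : DifferentiableAt ℝ η y) (hζ : DifferentiableAt ℝ ζ y)
    (h : ∀ᶠ t in 𝓝 0, perturbation η ζ t (g t) = y) :
    deriv g 0 = -η y := by
  obtain rfl := apply_zero_of_perturbation_eq h
  rw [(eventuallyEq_sub_of_perturbation_eq h).deriv_eq, deriv_const_sub]
  exact congrArg Neg.neg (deriv_smul_add_sq_smul_zero (hη.comp 0 hg) (hζ.comp 0 hg))

theorem deriv_deriv_zero_of_perturbation_eq (hg : ContDiffAt ℝ 2 g 0)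
    (hη : ContDiffAt ℝ 2 η y) (hζ : ContDiffAt ℝ 2 ζ y)
    (h : ∀ᶠ t in 𝓝 0, perturbation η ζ t (g t) = y) :
    deriv (deriv g) 0 = (2 : ℝ) • fderiv ℝ η y (η y) - ζ y := by
  obtain rfl := apply_zero_of_perturbation_eq h
  have hg1 : DifferentiableAt ℝ g 0 := hg.differentiableAt two_ne_zero
  have hη1 : DifferentiableAt ℝ η (g 0) := hη.differentiableAt two_ne_zero
  have h_deriv_η : deriv (fun t => η (g t)) 0 = -fderiv ℝ η (g 0) (η (g 0)) := by
    rw [← map_neg, ← deriv_zero_of_perturbation_eq hg1 hη1 (hζ.differentiableAt two_ne_zero) h]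
    exact fderiv_comp_deriv 0 hη1 hg1
  rw [(eventuallyEq_sub_of_perturbation_eq h).deriv.deriv_eq, deriv_const_sub', deriv.fun_neg,
    deriv_deriv_smul_add_sq_smul_zero (hη.fun_comp 0 hg) (hζ.fun_comp 0 hg), h_deriv_η]
  module

end

theorem stmt_5_general {N : ℕ} (u : (Fin N → ℝ) → ℝ) (hu : ContDiff ℝ 3 u)
    (η ζ : (Fin N → ℝ) → (Fin N → ℝ))
    (hη : ContDiff ℝ 2 η) (hζ : ContDiff ℝ 2 ζ)
    (Φ : ℝ → (Fin N → ℝ) → (Fin N → ℝ))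
    (hΦ : ∀ t x, Φ t x = x + t • η x + (t ^ 2 / 2) • ζ x)
    (ψ : ℝ → (Fin N → ℝ) → (Fin N → ℝ)) (ε : ℝ) (hε : 0 < ε)
    (hinv : ∀ t, |t| < ε → ∀ x, Φ t (ψ t x) = x ∧ ψ t (Φ t x) = x)
    (y : Fin N → ℝ) (hψ : ContDiffAt ℝ 2 (fun t => ψ t y) 0) :
    (fun t => u (ψ t y)) 0 = u y ∧
    deriv (fun t => u (ψ t y)) 0 = -(fderiv ℝ u y (η y)) ∧
    deriv (deriv (fun t => u (ψ t y))) 0 =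
      iteratedFDeriv ℝ 2 u y ![η y, η y]
        + fderiv ℝ u y ((2 : ℝ) • fderiv ℝ η y (η y) - ζ y) := by
  set g : ℝ → (Fin N → ℝ) := fun t => ψ t y
  have h_inverse : ∀ᶠ t in 𝓝 0, perturbation η ζ t (g t) = y := by
    filter_upwards [Metric.ball_mem_nhds (0 : ℝ) hε] with t ht
    rw [perturbation, ← hΦ]
    exact (hinv t (by simpa using ht) y).1
  have hg0 : g 0 = y := apply_zero_of_perturbation_eq h_inverse
  have hg1 : DifferentiableAt ℝ g 0 := hψ.differentiableAt two_ne_zero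
  have hu2 : ContDiff ℝ 2 u := hu.of_le (by norm_num)
  have hg' : deriv g 0 = -η y := deriv_zero_of_perturbation_eq hg1
    (hη.differentiable two_ne_zero y) (hζ.differentiable two_ne_zero y) h_inverse
  change u (g 0) = u y ∧ deriv (u ∘ g) 0 = _ ∧ deriv (deriv (u ∘ g)) 0 = _
  refine ⟨congrArg u hg0, ?_, ?_⟩
  · rw [fderiv_comp_deriv_of_eq 0 (hu2.differentiable two_ne_zero y) hg1 hg0.symm, hg0, hg',
      map_neg]
  · rw [hu2.contDiffAt.deriv_deriv_comp hψ, hg0, hg',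
      deriv_deriv_zero_of_perturbation_eq hψ hη.contDiffAt hζ.contDiffAt h_inverse]
    simp only [iteratedFDeriv_two_apply, Matrix.cons_val_zero, Matrix.cons_val_one, map_neg,
      neg_apply, neg_neg]

theorem stmt_5 {N : ℕ} (u : (Fin N → ℝ) → ℝ) (hu : ContDiff ℝ 3 u)
    (hub : ∀ k : ℕ, k ≤ 3 → ∃ C, ∀ x, ‖iteratedFDeriv ℝ k u x‖ ≤ C)
    (η ζ : (Fin N → ℝ) → (Fin N → ℝ))
    (hη : ContDiff ℝ 2 η) (hζ : ContDiff ℝ 2 ζ)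
    (hηs : HasCompactSupport η) (hζs : HasCompactSupport ζ)
    (Φ : ℝ → (Fin N → ℝ) → (Fin N → ℝ))
    (hΦ : ∀ t x, Φ t x = x + t • η x + (t ^ 2 / 2) • ζ x)
    (ψ : ℝ → (Fin N → ℝ) → (Fin N → ℝ)) (ε : ℝ) (hε : 0 < ε)
    (hinv : ∀ t, |t| < ε → ∀ x, Φ t (ψ t x) = x ∧ ψ t (Φ t x) = x)
    (y : Fin N → ℝ) (hψ : ContDiffAt ℝ 2 (fun t => ψ t y) 0) :
    (fun t => u (ψ t y)) 0 = u y ∧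
    deriv (fun t => u (ψ t y)) 0 = -(fderiv ℝ u y (η y)) ∧
    deriv (deriv (fun t => u (ψ t y))) 0 =
      iteratedFDeriv ℝ 2 u y ![η y, η y]
        + fderiv ℝ u y ((2 : ℝ) • fderiv ℝ η y (η y) - ζ y) :=
  stmt_5_general u hu η ζ hη hζ Φ hΦ ψ ε hε hinv y hψ
end

section
/- Let (a_ε), (b_ε) be sequences of nonnegative measurable functions on a finite measure space Ω, and let p, q > 1 with 1/p + 1/q = 1. If ∫_Ω (a_ε^p/p + b_ε^q/q − a_ε·b_ε) → 0 and ∫_Ω (a_ε^p + b_ε^q) is uniformly bounded, and moreover p ≥ 2, then ∫_Ω b_ε^q·|t_ε − 1|^p → 0 where t_ε = a_ε / b_ε^{q/p} (set t_ε = 0 where b_ε = 0). -/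
/-!
Young's inequality `a b ≤ a ^ p / p + b ^ q / q` is an equality exactly when `a ^ p = b ^ q`, i.e.
`t = 1`. Substituting `a = t b ^ (q / p)`, its defect becomes `b ^ q (t ^ p - p t + p - 1) / p`, and
for `p ≥ 2` the Bregman divergence `t ^ p - p t + p - 1` of `t ↦ t ^ p` at `1` dominates
`|t - 1| ^ p`: on either side of `t = 1`, comparing derivatives reduces this to the superadditivity
`x ^ (p - 1) + y ^ (p - 1) ≤ (x + y) ^ (p - 1)`. Integrating this pointwise bound, the integral of
`b ^ q |t - 1| ^ p` is at most `p` times the integrated Young defect, which tends to `0`.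
-/

open MeasureTheory Filter

namespace Real

variable {p s : ℝ}

lemma sub_one_rpow_le_of_one_le (hp : 2 ≤ p) (hs : 1 ≤ s) :
    (s - 1) ^ p ≤ s ^ p - p * s + (p - 1) := by
  let F : ℝ → ℝ := fun y => y ^ p - p * y - (y - 1) ^ p
  have hderiv : ∀ y ∈ interior (Set.Ici (1 : ℝ)),
      HasDerivWithinAt F (p * (y ^ (p - 1) - 1 - (y - 1) ^ (p - 1)))
        (interior (Set.Ici (1 : ℝ))) y := by
    intro y hy
    rw [interior_Ici] at hy
    have hpow : HasDerivAt (fun y : ℝ => y ^ p) (p * y ^ (p - 1)) y :=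
      hasDerivAt_rpow_const (Or.inl (by linarith [hy.out]))
    have hshift := ((hasDerivAt_id y).sub_const 1).rpow_const (p := p) (Or.inr (by linarith))
    exact ((hpow.sub ((hasDerivAt_id y).const_mul p)).sub hshift).hasDerivWithinAt.congr_deriv
      (by simp only [id]; ring)
  have hcont : ContinuousOn F (Set.Ici 1) := by
    have hpow := continuous_rpow_const (by linarith : (0 : ℝ) ≤ p)
    exact ((hpow.sub (continuous_const_mul p)).sub
      (hpow.comp (continuous_sub_right 1))).continuousOn
  have hmono : MonotoneOn F (Set.Ici 1) := by
    refine monotoneOn_of_hasDerivWithinAt_nonneg (convex_Ici 1) hcont hderiv fun y hy => ?_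
    rw [interior_Ici] at hy
    have hsuper := add_rpow_le_rpow_add zero_le_one (sub_nonneg.2 hy.out.le)
      (by linarith : 1 ≤ p - 1)
    rw [one_rpow, add_sub_cancel] at hsuper
    nlinarith
  have h := hmono Set.self_mem_Ici hs hs
  simp only [F, one_rpow, sub_self, zero_rpow (by linarith : p ≠ 0)] at h
  linarith

lemma one_sub_rpow_le_of_le_one (hp : 2 ≤ p) (hs₀ : 0 ≤ s) (hs₁ : s ≤ 1) :
    (1 - s) ^ p ≤ s ^ p - p * s + (p - 1) := by
  let G : ℝ → ℝ := fun y => y ^ p - p * y - (1 - y) ^ p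
  have hderiv : ∀ y ∈ interior (Set.Icc (0 : ℝ) 1),
      HasDerivWithinAt G (p * (y ^ (p - 1) - 1 + (1 - y) ^ (p - 1)))
        (interior (Set.Icc (0 : ℝ) 1)) y := by
    intro y hy
    rw [interior_Icc] at hy
    have hpow : HasDerivAt (fun y : ℝ => y ^ p) (p * y ^ (p - 1)) y :=
      hasDerivAt_rpow_const (Or.inl hy.1.ne')
    have hreflect := ((hasDerivAt_id y).const_sub 1).rpow_const (p := p) (Or.inr (by linarith))
    exact ((hpow.sub ((hasDerivAt_id y).const_mul p)).sub hreflect).hasDerivWithinAt.congr_deriv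
      (by simp only [id]; ring)
  have hcont : ContinuousOn G (Set.Icc 0 1) := by
    have hpow := continuous_rpow_const (by linarith : (0 : ℝ) ≤ p)
    exact ((hpow.sub (continuous_const_mul p)).sub (hpow.comp (continuous_sub_left 1))).continuousOn
  have hanti : AntitoneOn G (Set.Icc 0 1) := by
    refine antitoneOn_of_hasDerivWithinAt_nonpos (convex_Icc 0 1) hcont hderiv fun y hy => ?_
    rw [interior_Icc] at hy
    have hsuper := add_rpow_le_rpow_add hy.1.le (sub_nonneg.2 hy.2.le) (by linarith : 1 ≤ p - 1)
    rw [add_sub_cancel, one_rpow] at hsuper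
    nlinarith
  have h := hanti ⟨hs₀, hs₁⟩ ⟨zero_le_one, le_rfl⟩ hs₁
  simp only [G, one_rpow, sub_self, zero_rpow (by linarith : p ≠ 0)] at h
  linarith

lemma abs_sub_one_rpow_le (hp : 2 ≤ p) (hs : 0 ≤ s) :
    |s - 1| ^ p ≤ s ^ p - p * s + (p - 1) := by
  rcases le_total s 1 with h | h
  · rw [abs_of_nonpos (by linarith), neg_sub]
    exact one_sub_rpow_le_of_le_one hp hs h
  · rw [abs_of_nonneg (by linarith)]
    exact sub_one_rpow_le_of_one_le hp h

variable {q a b : ℝ}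

lemma rpow_mul_abs_sub_one_rpow_le (hpq : p.HolderConjugate q) (hp : 2 ≤ p) (ha : 0 ≤ a)
    (hb : 0 ≤ b) :
    b ^ q * |(if b = 0 then 0 else a / b ^ (q / p)) - 1| ^ p
      ≤ p * (a ^ p / p + b ^ q / q - a * b) := by
  rcases hb.eq_or_lt with rfl | hb
  · simpa [zero_rpow hpq.symm.ne_zero, mul_div_cancel₀ _ hpq.ne_zero] using rpow_nonneg ha p
  rw [if_neg hb.ne']
  set s := a / b ^ (q / p)
  have hs : 0 ≤ s := by positivity
  have hsp : b ^ q * s ^ p = a ^ p := by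
    rw [div_rpow ha (by positivity), ← rpow_mul hb.le, div_mul_cancel₀ _ hpq.ne_zero,
      mul_div_cancel₀ _ (by positivity)]
  have hs1 : b ^ q * s = a * b := by
    rw [mul_div_left_comm, ← rpow_sub hb, hpq.symm.div_conj_eq_sub_one, sub_sub_cancel, rpow_one]
  calc b ^ q * |s - 1| ^ p ≤ b ^ q * (s ^ p - p * s + (p - 1)) :=
        mul_le_mul_of_nonneg_left (abs_sub_one_rpow_le hp hs) (by positivity)
    _ = a ^ p + p / q * b ^ q - p * (a * b) := by
        rw [hpq.div_conj_eq_sub_one, ← hsp, ← hs1]; ring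
    _ = p * (a ^ p / p + b ^ q / q - a * b) := by
        field_simp [hpq.ne_zero, hpq.symm.ne_zero]

end Real

theorem stmt_17_general {X : Type*} [MeasurableSpace X] (μ : Measure X)
    (a b : ℕ → X → ℝ) (ha : ∀ n x, 0 ≤ a n x) (hb : ∀ n x, 0 ≤ b n x)
    (p q : ℝ) (hp : 2 ≤ p) (hpq : 1 / p + 1 / q = 1)
    (hiap : ∀ n, Integrable (fun x => a n x ^ p) μ)
    (hibq : ∀ n, Integrable (fun x => b n x ^ q) μ)
    (hiab : ∀ n, Integrable (fun x => a n x * b n x) μ)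
    (t : ℕ → X → ℝ)
    (ht : ∀ n x, t n x = if b n x = 0 then 0 else a n x / (b n x) ^ (q / p))
    (h1 : Tendsto (fun n => ∫ x, (a n x ^ p / p + b n x ^ q / q - a n x * b n x) ∂μ)
      atTop (nhds 0)) :
    Tendsto (fun n => ∫ x, b n x ^ q * |t n x - 1| ^ p ∂μ) atTop (nhds 0) := by
  have hpq' : p.HolderConjugate q :=
    Real.holderConjugate_iff.2 ⟨by linarith, by simpa only [one_div] using hpq⟩
  have hnonneg : ∀ n x, 0 ≤ b n x ^ q * |t n x - 1| ^ p := fun n x =>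
    mul_nonneg (Real.rpow_nonneg (hb n x) q) (Real.rpow_nonneg (abs_nonneg _) p)
  refine squeeze_zero (fun n => integral_nonneg (hnonneg n)) (fun n => ?_)
    (by simpa using h1.const_mul p)
  rw [← integral_const_mul]
  refine integral_mono_of_nonneg (.of_forall (hnonneg n))
    (((((hiap n).div_const p).add ((hibq n).div_const q)).sub (hiab n)).const_mul p)
    (.of_forall fun x => ?_)
  simpa only [ht] using Real.rpow_mul_abs_sub_one_rpow_le hpq' hp (ha n x) (hb n x)

theorem stmt_17 {X : Type*} [MeasurableSpace X] (μ : Measure X) [IsFiniteMeasure μ]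
    (a b : ℕ → X → ℝ) (ha : ∀ n x, 0 ≤ a n x) (hb : ∀ n x, 0 ≤ b n x)
    (hma : ∀ n, Measurable (a n)) (hmb : ∀ n, Measurable (b n))
    (p q : ℝ) (hp : 2 ≤ p) (hq : 1 < q) (hpq : 1 / p + 1 / q = 1)
    (hiap : ∀ n, Integrable (fun x => a n x ^ p) μ)
    (hibq : ∀ n, Integrable (fun x => b n x ^ q) μ)
    (hiab : ∀ n, Integrable (fun x => a n x * b n x) μ)
    (t : ℕ → X → ℝ)
    (ht : ∀ n x, t n x = if b n x = 0 then 0 else a n x / (b n x) ^ (q / p))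
    (hit : ∀ n, Integrable (fun x => b n x ^ q * |t n x - 1| ^ p) μ)
    (h1 : Tendsto (fun n => ∫ x, (a n x ^ p / p + b n x ^ q / q - a n x * b n x) ∂μ)
      atTop (nhds 0))
    (h2 : ∃ M : ℝ, ∀ n, (∫ x, (a n x ^ p + b n x ^ q) ∂μ) ≤ M) :
    Tendsto (fun n => ∫ x, b n x ^ q * |t n x - 1| ^ p ∂μ) atTop (nhds 0) :=
  stmt_17_general μ a b ha hb p q hp hpq hiap hibq hiab t ht h1
end
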